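/- Let G be a finite group, F a field of characteristic p > 0, and P a p-subgroup of G. The Brauer homomorphism Br_P : Z(FG) → Z(F C_G(P)), defined on a class sum by restricting the sum to those elements lying in C_G(P), is an F-algebra homomorphism. -/

import Mathlib

/-!
Write `Br z` for the restriction of `z ∈ Z(F[G])` to `C = C_G(P)`. For `c ∈ C`,
`(z * w)(c) = ∑_{x ∈ G} z(x) w(x⁻¹c)`, and since `z`, `w` are class functions and `c` commutes
with `P`, the summand is invariant under conjugation by `P`. The `P`-orbits on `G` have
`p`-power size, so in characteristic `p` only the fixed points of the conjugation action,
i.e. the elements of `C`, contribute, and the sum is `(Br z * Br w)(c)`.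
-/

open Finset MulAction

section

variable {p : ℕ} [Fact p.Prime]

namespace IsPGroup

theorem dvd_card_orbit_of_notMem_fixedPoints {Q α : Type*} [Group Q] [MulAction Q α]
    (hQ : IsPGroup p Q) {x : α} [Finite (orbit Q x)] (hx : x ∉ fixedPoints Q α) :
    p ∣ Nat.card (orbit Q x) := by
  obtain ⟨_ | n, hn⟩ := hQ.card_orbit x
  · rw [← subsingleton_orbit_iff_mem_fixedPoints] at hx
    exact absurd (Set.subsingleton_coe _ |>.mp (Finite.card_le_one_iff_subsingleton.mp hn.le)) hx
  · exact hn ▸ dvd_pow_self p n.succ_ne_zero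

theorem sum_eq_sum_filter_mem_fixedPoints {Q α R : Type*} [Group Q] [MulAction Q α] [Fintype α]
    [DecidablePred (· ∈ fixedPoints Q α)] [NonAssocSemiring R] [CharP R p]
    (hQ : IsPGroup p Q) (f : α → R) (hf : ∀ (q : Q) x, f (q • x) = f x) :
    ∑ x, f x = ∑ x with x ∈ fixedPoints Q α, f x := by
  classical
  set g : α → R := fun x => if x ∈ fixedPoints Q α then 0 else f x
  have hg : ∀ (q : Q) x, g (q • x) = g x := by
    intro q x
    have : q • x ∈ fixedPoints Q α ↔ x ∈ fixedPoints Q α := by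
      simp only [← subsingleton_orbit_iff_mem_fixedPoints, orbit_smul]
    simp only [g, this, hf]
  have hg_orbit : ∀ x, ∑ y ∈ (orbit Q x).toFinset, g y = 0 := by
    intro x
    rw [sum_congr rfl fun y hy => (?_ : g y = g x), sum_const, Set.toFinset_card,
      ← Nat.card_eq_fintype_card, nsmul_eq_mul]
    · by_cases hx : x ∈ fixedPoints Q α
      · simp only [g, if_pos hx, mul_zero]
      · rw [(CharP.cast_eq_zero_iff R p _).2 (hQ.dvd_card_orbit_of_notMem_fixedPoints hx),
          zero_mul]
    · obtain ⟨q, rfl⟩ := Set.mem_toFinset.1 hy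
      exact hg q x
  have hg_sum : ∑ x, g x = 0 := by
    rw [← sum_fiberwise univ (Quotient.mk'' : α → orbitRel.Quotient Q α) g]
    refine sum_eq_zero fun ω _ => ?_
    induction ω using Quotient.inductionOn' with | h x => ?_
    convert hg_orbit x using 2
    ext y
    simp [Quotient.eq'', orbitRel_apply]
  calc ∑ x, f x = ∑ x, ((if x ∈ fixedPoints Q α then f x else 0) + g x) :=
        sum_congr rfl fun x _ => by
          by_cases hx : x ∈ fixedPoints Q α <;>
            simp only [g, hx, if_true, if_false, add_zero, zero_add]
    _ = _ := by rw [sum_add_distrib, hg_sum, add_zero, sum_filter]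

end IsPGroup

theorem Subgroup.mem_fixedPoints_comap_ofConjAct_iff {G : Type*} [Group G] (P : Subgroup G)
    (x : G) :
    x ∈ fixedPoints (P.comap (ConjAct.ofConjAct : ConjAct G ≃* G).toMonoidHom) G ↔
      x ∈ centralizer (P : Set G) := by
  simp only [mem_fixedPoints, Subtype.forall, mem_comap, mem_centralizer_iff]
  refine ⟨fun h u hu => ?_, fun h q hq => ?_⟩
  · have := h (ConjAct.toConjAct u) hu
    rw [Submonoid.mk_smul, ConjAct.toConjAct_smul] at this
    rw [eq_mul_inv_iff_mul_eq.mp this.symm]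
  · rw [Submonoid.mk_smul, ConjAct.smul_def, h (ConjAct.ofConjAct q) hq, mul_inv_cancel_right]

theorem IsPGroup.sum_eq_sum_centralizer {G R : Type*} [Group G] [Fintype G] [NonAssocSemiring R]
    [CharP R p] {P : Subgroup G} [Fintype (Subgroup.centralizer (P : Set G))] (hP : IsPGroup p P)
    (f : G → R) (hf : ∀ u ∈ P, ∀ x, f (u * x * u⁻¹) = f x) :
    ∑ x, f x = ∑ x : Subgroup.centralizer (P : Set G), f x := by
  classical
  have hQ : IsPGroup p (P.comap (ConjAct.ofConjAct : ConjAct G ≃* G).toMonoidHom) :=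
    hP.comap_of_injective _ (MulEquiv.injective _)
  rw [hQ.sum_eq_sum_filter_mem_fixedPoints f fun q x => hf _ q.2 x]
  exact sum_subtype _ (fun x => by rw [mem_filter_univ, P.mem_fixedPoints_comap_ofConjAct_iff]) f

namespace MonoidAlgebra

variable {k G : Type*} [CommSemiring k] [Group G]

theorem coeff_mul_eq_sum [Fintype G] (x y : k[G]) (g : G) :
    (x * y).coeff g = ∑ h, x.coeff h * y.coeff (h⁻¹ * g) := by
  rw [coeff_mul_apply_left, Finsupp.sum_fintype _ _ fun _ => zero_mul _]

theorem mem_center_iff_coeff_conj {z : k[G]} :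
    z ∈ Subalgebra.center k k[G] ↔ ∀ g h : G, z.coeff (g * h * g⁻¹) = z.coeff h := by
  rw [Subalgebra.mem_center_iff]
  constructor
  · intro hz g h
    have := congr(($(hz (single g 1))).coeff (g * h))
    rwa [coeff_single_mul_apply, coeff_mul_single_apply, one_mul, mul_one, inv_mul_cancel_left,
      eq_comm] at this
  · intro hz x
    induction x using induction_linear with
    | zero => rw [zero_mul, mul_zero]
    | add x y hx hy => rw [add_mul, mul_add, hx, hy]
    | single g r =>
      ext h
      rw [coeff_single_mul_apply, coeff_mul_single_apply, mul_comm, ← hz g⁻¹ (h * g⁻¹), inv_inv,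
        ← mul_assoc, inv_mul_cancel_right]

section Restriction

variable (H : Subgroup G)

theorem comapDomain_subtype_mem_center {z : k[G]} (hz : z ∈ Subalgebra.center k k[G]) :
    comapDomain ((↑) : H → G) Subtype.val_injective z ∈ Subalgebra.center k k[H] := by
  rw [mem_center_iff_coeff_conj] at hz ⊢
  intro g h
  simpa using hz g h

theorem comapDomain_subtype_single_one (r : k) :
    comapDomain ((↑) : H → G) Subtype.val_injective (single 1 r) = single 1 r := by
  simpa using comapDomain_single_map ((↑) : H → G) Subtype.val_injective 1 r

end Restriction

theorem comapDomain_centralizer_mul [CharP k p] [Fintype G] {P : Subgroup G} (hP : IsPGroup p P)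
    {z w : k[G]} (hz : z ∈ Subalgebra.center k k[G]) (hw : w ∈ Subalgebra.center k k[G]) :
    comapDomain ((↑) : Subgroup.centralizer (P : Set G) → G) Subtype.val_injective (z * w) =
      comapDomain (↑) Subtype.val_injective z * comapDomain (↑) Subtype.val_injective w := by
  classical
  rw [mem_center_iff_coeff_conj] at hz hw
  ext c
  have hf : ∀ u ∈ P, ∀ x, z.coeff (u * x * u⁻¹) * w.coeff ((u * x * u⁻¹)⁻¹ * c) =
      z.coeff x * w.coeff (x⁻¹ * c) := by
    intro u hu x
    have hcu : u⁻¹ * (c : G) = c * u⁻¹ := Subgroup.mem_centralizer_iff.mp c.2 u⁻¹ (inv_mem hu)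
    have : (u * x * u⁻¹)⁻¹ * c = u * (x⁻¹ * c) * u⁻¹ := by
      simp only [mul_inv_rev, inv_inv, mul_assoc, hcu]
    rw [hz, this, hw]
  simp only [coeff_comapDomain, Finsupp.comapDomain_apply, coeff_mul_eq_sum,
    hP.sum_eq_sum_centralizer (fun x => z.coeff x * w.coeff (x⁻¹ * c)) hf, Subgroup.coe_mul,
    Subgroup.coe_inv]

noncomputable def brauerHom [CharP k p] [Fintype G] {P : Subgroup G} (hP : IsPGroup p P) :
    Subalgebra.center k k[G] →ₐ[k] Subalgebra.center k k[Subgroup.centralizer (P : Set G)] where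
  toFun z := ⟨comapDomain (↑) Subtype.val_injective z.1, comapDomain_subtype_mem_center _ z.2⟩
  map_one' := Subtype.ext (comapDomain_subtype_single_one _ 1)
  map_mul' z w := Subtype.ext (comapDomain_centralizer_mul hP z.2 w.2)
  map_zero' := Subtype.ext <| by simp only [ZeroMemClass.coe_zero, comapDomain_zero]
  map_add' z w := Subtype.ext <| by simp only [AddMemClass.coe_add, comapDomain_add]
  commutes' r := Subtype.ext <| by
    simpa only [Subalgebra.coe_algebraMap, coe_algebraMap, Function.comp_apply,
      Algebra.algebraMap_self, RingHom.id_apply] using comapDomain_subtype_single_one _ r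

end MonoidAlgebra

end

/-- The Brauer homomorphism `Br_P : Z(FG) → Z(F C_G(P))`, given on a central element
`∑ a_g g` by restricting the sum to those `g` lying in `C_G(P)`, is an `F`-algebra
homomorphism. -/
theorem stmt_10 (F : Type*) [Field F] (p : ℕ) [Fact p.Prime] [CharP F p]
    (G : Type*) [Group G] [Fintype G] (P : Subgroup G) (hP : IsPGroup p P) :
    ∃ Br : Subalgebra.center F (MonoidAlgebra F G) →ₐ[F]
        Subalgebra.center F (MonoidAlgebra F ↥(Subgroup.centralizer (P : Set G))),
      ∀ (z : Subalgebra.center F (MonoidAlgebra F G))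
        (g : ↥(Subgroup.centralizer (P : Set G))),
        (Br z : MonoidAlgebra F ↥(Subgroup.centralizer (P : Set G))).coeff g
          = (z : MonoidAlgebra F G).coeff (g : G) :=
  ⟨MonoidAlgebra.brauerHom hP, fun _ _ => rfl⟩
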